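/- Let f : ℕ → ℕ → ℝ → ℝ be such that for fixed x, y the map s ↦ f(x, y, s) is strictly decreasing on the positive reals and takes positive values there. Let x, y ∈ ℕ, let s, Δ > 0 be reals, let a > 0 be a natural number with a · f(x, y, s) = 1, and let M be a natural number with M ≤ a and M · f(x, y, Δ) ≥ 1. Then s ≥ Δ. -/

import Mathlib

theorem le_of_mul_eq_one_of_one_le_mul {α : Type*} [Semiring α] [LinearOrder α]
    [IsStrictOrderedRing α] {a M u v : α} (hM : 0 ≤ M) (hMa : M ≤ a) (hau : a * u = 1)
    (hMv : 1 ≤ M * v) : u ≤ v := by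
  have hu : 0 < u := by
    by_contra! hu
    have : a * u ≤ 0 := mul_nonpos_of_nonneg_of_nonpos (hM.trans hMa) hu
    exact absurd (hau ▸ this) zero_lt_one.not_ge
  have hM_pos : 0 < M := by
    rcases hM.eq_or_lt with rfl | h
    · exact absurd (zero_mul v ▸ hMv) zero_lt_one.not_ge
    · exact h
  have hMu : M * u ≤ M * v :=
    calc M * u ≤ a * u := mul_le_mul_of_nonneg_right hMa hu.le
      _ = 1 := hau
      _ ≤ M * v := hMv
  exact le_of_mul_le_mul_left hMu hM_pos

theorem deterministic_report_correct_general
    (f : ℕ → ℕ → ℝ → ℝ)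
    (hmono : ∀ x y : ℕ, StrictAntiOn (f x y) (Set.Ioi (0 : ℝ)))
    (x y : ℕ) (s Δ : ℝ) (hs : 0 < s) (hΔ : 0 < Δ)
    (a : ℕ) (hafs : (a : ℝ) * f x y s = 1)
    (M : ℕ) (hMa : M ≤ a) (hMf : 1 ≤ (M : ℝ) * f x y Δ) :
    Δ ≤ s := by
  have hf : f x y s ≤ f x y Δ :=
    le_of_mul_eq_one_of_one_le_mul M.cast_nonneg (Nat.cast_le.mpr hMa) hafs hMf
  exact ((hmono x y).le_iff_ge hs hΔ).mp hf

/-- if `s ↦ f x y s` is strictly decreasing and positive on the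
positive reals, `a·f(x,y,s) = 1` with `a > 0`, `M ≤ a` and `M·f(x,y,Δ) ≥ 1`,
then `s ≥ Δ`. -/
theorem deterministic_report_correct
    (f : ℕ → ℕ → ℝ → ℝ)
    (hmono : ∀ x y : ℕ, StrictAntiOn (f x y) (Set.Ioi (0 : ℝ)))
    (hpos : ∀ (x y : ℕ) (s : ℝ), 0 < s → 0 < f x y s)
    (x y : ℕ) (s Δ : ℝ) (hs : 0 < s) (hΔ : 0 < Δ)
    (a : ℕ) (ha : 0 < a) (hafs : (a : ℝ) * f x y s = 1)
    (M : ℕ) (hMa : M ≤ a) (hMf : 1 ≤ (M : ℝ) * f x y Δ) :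
    Δ ≤ s :=
  deterministic_report_correct_general f hmono x y s Δ hs hΔ a hafs M hMa hMf
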